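/- arXiv:2602.20706 — 2 statements merged into one kernel-verified Lean document; each statement's English description precedes it below -/
import Mathlib

section
/- Let n be a positive integer, 0 ≤ τ < 1, and 0 ≤ β ≤ 1. Suppose x : {1,...,n} → ℝ satisfies 0 ≤ x_t ≤ 1 for all t and, for every t ∈ {1,...,n}, 1 - x_t ≤ β·τ + ((1-τ)/n)·∑_{s=1}^{t} x_s. Then for every t ∈ {1,...,n}, ∑_{s=1}^{t} x_s ≥ (1 - β·τ)·∑_{s=1}^{t} (1 - (1-τ)/(n+1-τ))^s. -/
/-! Write `N = n`, `c = 1 - τ`, `a = βτ`, `r = 1 - c / (N + c) = N / (N + c)` and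
`S_t = ∑_{s ≤ t} x_s`. Multiplied by `N`, the hypothesis at `t + 1` reads
`N (1 - x_{t+1} - a) ≤ c S_{t+1}`, which rearranges to `S_{t+1} ≥ r (S_t + 1 - a)`.
Since the geometric sums `G_t = ∑_{s ≤ t} r^s` satisfy `G_{t+1} = r (1 + G_t)`,
the bound `S_t ≥ (1 - a) G_t` propagates by induction on `t`. -/

open Finset

lemma sum_Icc_one_pow_succ (r : ℝ) (t : ℕ) :
    ∑ s ∈ Icc 1 (t + 1), r ^ s = r * (1 + ∑ s ∈ Icc 1 t, r ^ s) := by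
  induction t with
  | zero => simp
  | succ t ih =>
    rw [sum_Icc_succ_top (b := t) (by omega), sum_Icc_succ_top (b := t + 1) (by omega), ih]
    ring

section

variable {N c a : ℝ}

lemma one_sub_div_add_mul_le_of_one_sub_le {S y : ℝ} (hN : 0 < N) (hc : 0 < c)
    (h : 1 - y ≤ a + c / N * (S + y)) :
    (1 - c / (N + c)) * (S + 1 - a) ≤ S + y := by
  have hNc : 0 < N + c := by linarith
  have h' : N * (1 - y - a) ≤ c * (S + y) := by
    have := mul_le_mul_of_nonneg_left h hN.le
    rw [mul_add, ← mul_assoc, mul_div_cancel₀ _ hN.ne'] at this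
    linarith
  rw [one_sub_div hNc.ne', add_sub_cancel_right, div_mul_eq_mul_div, div_le_iff₀ hNc]
  linarith

theorem one_sub_mul_sum_pow_le_sum_of_one_sub_le (hN : 0 < N) (hc : 0 < c) {x : ℕ → ℝ} {m : ℕ}
    (h : ∀ t ∈ Icc 1 m, 1 - x t ≤ a + c / N * ∑ s ∈ Icc 1 t, x s) :
    ∀ t ≤ m, (1 - a) * ∑ s ∈ Icc 1 t, (1 - c / (N + c)) ^ s ≤ ∑ s ∈ Icc 1 t, x s := by
  have hr : 0 ≤ 1 - c / (N + c) := by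
    rw [sub_nonneg, div_le_one (by linarith)]
    linarith
  intro t
  induction t with
  | zero => simp
  | succ t ih =>
    intro ht
    have hstep := h (t + 1) (mem_Icc.mpr ⟨by omega, ht⟩)
    rw [sum_Icc_succ_top (by omega)] at hstep
    rw [sum_Icc_one_pow_succ, sum_Icc_succ_top (by omega)]
    calc (1 - a) * ((1 - c / (N + c)) * (1 + ∑ s ∈ Icc 1 t, (1 - c / (N + c)) ^ s))
        = (1 - c / (N + c)) * ((1 - a) * ∑ s ∈ Icc 1 t, (1 - c / (N + c)) ^ s + 1 - a) := by
          ring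
      _ ≤ (1 - c / (N + c)) * (∑ s ∈ Icc 1 t, x s + 1 - a) := by
          gcongr
          exact ih (by omega)
      _ ≤ _ := one_sub_div_add_mul_le_of_one_sub_le hN hc hstep

end

theorem stmt_0_general (n : ℕ) (τ β : ℝ)
    (hτ1 : τ < 1)
    (x : ℕ → ℝ)
    (hrec : ∀ t ∈ Finset.Icc 1 n,
      1 - x t ≤ β * τ + (1 - τ) / n * ∑ s ∈ Finset.Icc 1 t, x s) :
    ∀ t ∈ Finset.Icc 1 n,
      ∑ s ∈ Finset.Icc 1 t, x s ≥
        (1 - β * τ) * ∑ s ∈ Finset.Icc 1 t, (1 - (1 - τ) / (n + 1 - τ)) ^ s := by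
  intro t ht
  obtain ⟨ht1, htn⟩ := mem_Icc.mp ht
  have hn : (0 : ℝ) < n := by exact_mod_cast (show 0 < n by omega)
  rw [add_sub_assoc]
  exact one_sub_mul_sum_pow_le_sum_of_one_sub_le hn (sub_pos.mpr hτ1) hrec t htn

theorem stmt_0 (n : ℕ) (hn : 0 < n) (τ β : ℝ)
    (hτ0 : 0 ≤ τ) (hτ1 : τ < 1) (hβ0 : 0 ≤ β) (hβ1 : β ≤ 1)
    (x : ℕ → ℝ)
    (hx : ∀ t ∈ Finset.Icc 1 n, 0 ≤ x t ∧ x t ≤ 1)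
    (hrec : ∀ t ∈ Finset.Icc 1 n,
      1 - x t ≤ β * τ + (1 - τ) / n * ∑ s ∈ Finset.Icc 1 t, x s) :
    ∀ t ∈ Finset.Icc 1 n,
      ∑ s ∈ Finset.Icc 1 t, x s ≥
        (1 - β * τ) * ∑ s ∈ Finset.Icc 1 t, (1 - (1 - τ) / (n + 1 - τ)) ^ s :=
  stmt_0_general n τ β hτ1 x hrec
end

section
/- Let 0 ≤ β·τ < 1. Define the function f(p) = H_p/(1 - β·τ) where H_p = ∑_{i=1}^{p} 1/i. Suppose a sequence (E_p)_{p≥1} of nonnegative reals satisfies E_1 ≤ 1/(1 - β·τ) and, for every p ≥ 2, (1 - β·τ)·E_p ≤ 1 + ((1 - β·τ)/p)·∑_{i=1}^{p-1} E_i. Then E_p ≤ H_p/(1 - β·τ) for all p ≥ 1. -/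
/-!
With `a p = (1 - β τ) E p` the hypotheses read `a p ≤ 1 + (a 1 + ⋯ + a (p - 1)) / p`.
The harmonic numbers satisfy this with equality, since `p H_p = p + H_1 + ⋯ + H_{p-1}`,
so strong induction gives `a p ≤ H_p`.
-/

open Finset

lemma sum_Icc_harmonic_add (p : ℕ) :
    ∑ i ∈ Icc 1 p, ∑ j ∈ Icc 1 i, (1 : ℝ) / j + (p + 1)
      = (p + 1) * ∑ i ∈ Icc 1 (p + 1), (1 : ℝ) / i := by
  induction p with
  | zero => simp
  | succ p ih =>
    rw [sum_Icc_succ_top (by omega), sum_Icc_succ_top (b := p + 1) (by omega)]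
    push_cast
    field_simp
    linear_combination ih

lemma le_harmonic_of_le_one_add_avg (a : ℕ → ℝ)
    (ha : ∀ p, a (p + 1) ≤ 1 + (∑ i ∈ Icc 1 p, a i) / (p + 1)) (p : ℕ) :
    a (p + 1) ≤ ∑ i ∈ Icc 1 (p + 1), (1 : ℝ) / i := by
  induction p using Nat.strong_induction_on with
  | _ p ih =>
    have hsum : ∑ i ∈ Icc 1 p, a i ≤ ∑ i ∈ Icc 1 p, ∑ j ∈ Icc 1 i, (1 : ℝ) / j := by
      refine sum_le_sum fun i hi => ?_
      obtain ⟨q, rfl⟩ : ∃ q, i = q + 1 := ⟨i - 1, by grind⟩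
      exact ih q (by grind)
    calc a (p + 1) ≤ 1 + (∑ i ∈ Icc 1 p, a i) / (p + 1) := ha p
      _ ≤ 1 + (∑ i ∈ Icc 1 p, ∑ j ∈ Icc 1 i, (1 : ℝ) / j) / (p + 1) := by gcongr
      _ = ∑ i ∈ Icc 1 (p + 1), (1 : ℝ) / i := by
        rw [eq_sub_of_add_eq (sum_Icc_harmonic_add p)]
        field_simp
        ring

theorem stmt_5_general (β τ : ℝ) (h1 : β * τ < 1)
    (E : ℕ → ℝ)
    (hE1 : E 1 ≤ 1 / (1 - β * τ))
    (hrec : ∀ p, 2 ≤ p →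
      (1 - β * τ) * E p ≤ 1 + (1 - β * τ) / p * ∑ i ∈ Finset.Icc 1 (p - 1), E i) :
    ∀ p, 1 ≤ p → E p ≤ (∑ i ∈ Finset.Icc 1 p, (1 : ℝ) / i) / (1 - β * τ) := by
  have hc : 0 < 1 - β * τ := by linarith
  have hscaled : ∀ p, (1 - β * τ) * E (p + 1)
      ≤ 1 + (∑ i ∈ Icc 1 p, (1 - β * τ) * E i) / (p + 1) := by
    rintro (_ | p)
    · simpa [mul_comm, ← le_div_iff₀ hc] using hE1
    · convert hrec (p + 2) (by omega) using 2
      rw [← mul_sum]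
      push_cast
      ring
  intro p hp
  obtain ⟨q, rfl⟩ : ∃ q, p = q + 1 := ⟨p - 1, by omega⟩
  rw [le_div_iff₀ hc, mul_comm]
  exact le_harmonic_of_le_one_add_avg (fun i => (1 - β * τ) * E i) hscaled q

theorem stmt_5 (β τ : ℝ) (h0 : 0 ≤ β * τ) (h1 : β * τ < 1)
    (E : ℕ → ℝ) (hEnn : ∀ p, 1 ≤ p → 0 ≤ E p)
    (hE1 : E 1 ≤ 1 / (1 - β * τ))
    (hrec : ∀ p, 2 ≤ p →
      (1 - β * τ) * E p ≤ 1 + (1 - β * τ) / p * ∑ i ∈ Finset.Icc 1 (p - 1), E i) :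
    ∀ p, 1 ≤ p → E p ≤ (∑ i ∈ Finset.Icc 1 p, (1 : ℝ) / i) / (1 - β * τ) :=
  stmt_5_general β τ h1 E hE1 hrec
end
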